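/- Character orthogonality over gauge configurations: for every loop γ supported in B_N and every current n ∈ 𝒞, the sum Σ_{σ ∈ Ω^1(B_N,ℤ₂)} ρ(σ(γ)) · Π_{p∈C_2(B_N)^+} ρ(dσ(p))^{n(p)} equals |Ω^1(B_N,ℤ₂)| if n ∈ 𝒞_γ, and equals 0 otherwise. Here ρ(σ(γ)) = Π_{e ∈ (supp γ)^+} ρ(σ(e)). -/

import Mathlib

open scoped Classical

namespace LGT

/-- A site (vertex) of the lattice `ℤ^m`. -/
abbrev Site (m : ℕ) := Fin m → ℤ

/-- The `i`-th unit vector. -/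
def unitVec (m : ℕ) (i : Fin m) : Site m := fun j => if j = i then 1 else 0

/-- An oriented nearest-neighbour edge of `ℤ^m`: it joins `base` and `base + e_dir`,
oriented from `base` to `base + e_dir` when `ori = true`, and oppositely otherwise. -/
structure OEdge (m : ℕ) where
  base : Site m
  dir : Fin m
  ori : Bool
deriving DecidableEq

/-- An oriented plaquette of `ℤ^m` (valid when `dir1 < dir2`): the unit square with
corners `base, base + e_dir1, base + e_dir2, base + e_dir1 + e_dir2`, positively
oriented when `ori = true`. -/
structure OPlaq (m : ℕ) where
  base : Site m
  dir1 : Fin m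
  dir2 : Fin m
  ori : Bool
deriving DecidableEq

/-- The same edge with reversed orientation. -/
def OEdge.neg {m : ℕ} (e : OEdge m) : OEdge m := ⟨e.base, e.dir, !e.ori⟩

/-- The same plaquette with reversed orientation. -/
def OPlaq.neg {m : ℕ} (p : OPlaq m) : OPlaq m := ⟨p.base, p.dir1, p.dir2, !p.ori⟩

/-- The source vertex of an oriented edge. -/
def OEdge.src {m : ℕ} (e : OEdge m) : Site m :=
  if e.ori then e.base else e.base + unitVec m e.dir

/-- The target vertex of an oriented edge. -/
def OEdge.tgt {m : ℕ} (e : OEdge m) : Site m :=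
  if e.ori then e.base + unitVec m e.dir else e.base

/-- `x ∈ B_N = [-N,N]^m ∩ ℤ^m`. -/
def inBox (m N : ℕ) (x : Site m) : Prop := ∀ i, |x i| ≤ (N : ℤ)

/-- `C_1(B_N)`: oriented edges with both endpoints in `B_N`. -/
def C1 (m N : ℕ) : Set (OEdge m) :=
  {e | inBox m N e.base ∧ inBox m N (e.base + unitVec m e.dir)}

/-- The four corners of a plaquette. -/
def OPlaq.corners {m : ℕ} (p : OPlaq m) : List (Site m) :=
  [p.base, p.base + unitVec m p.dir1, p.base + unitVec m p.dir2,
    p.base + unitVec m p.dir1 + unitVec m p.dir2]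

/-- The four oriented boundary edges of an oriented plaquette. -/
def OPlaq.bdry {m : ℕ} (p : OPlaq m) : List (OEdge m) :=
  let l : List (OEdge m) :=
    [⟨p.base, p.dir1, true⟩, ⟨p.base + unitVec m p.dir1, p.dir2, true⟩,
     ⟨p.base + unitVec m p.dir2, p.dir1, false⟩, ⟨p.base, p.dir2, false⟩]
  if p.ori then l else l.map OEdge.neg

/-- `C_2(B_N)`: oriented plaquettes with all corners in `B_N`. -/
def C2 (m N : ℕ) : Set (OPlaq m) :=
  {p | p.dir1 < p.dir2 ∧ ∀ x ∈ p.corners, inBox m N x}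

/-- `C_2(B_N)^+`: positively oriented plaquettes of `C_2(B_N)`. -/
def C2plus (m N : ℕ) : Set (OPlaq m) := {p | p ∈ C2 m N ∧ p.ori = true}

/-- `supp ∂̂e`: the plaquettes of `C_2(B_N)` whose oriented boundary contains `e`. -/
def cob (m N : ℕ) (e : OEdge m) : Set (OPlaq m) := {p | p ∈ C2 m N ∧ e ∈ p.bdry}

/-- A loop: a finitely supported `ℤ`-valued function on oriented edges with values in
`{-1,0,1}`, odd under orientation reversal, whose boundary vanishes as a `0`-chain. -/
structure IsLoop (m : ℕ) (γ : OEdge m → ℤ) : Prop where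
  finite_supp : (Function.support γ).Finite
  vals : ∀ e, γ e = -1 ∨ γ e = 0 ∨ γ e = 1
  antisym : ∀ e, γ (OEdge.neg e) = - γ e
  bdry_zero : ∀ v : Site m,
    (∑ᶠ e : OEdge m, γ e *
      ((if OEdge.tgt e = v then 1 else 0) - (if OEdge.src e = v then (1 : ℤ) else 0))) = 0

/-- A loop supported in `B_N`. -/
def LoopIn (m N : ℕ) (γ : OEdge m → ℤ) : Prop :=
  IsLoop m γ ∧ ∀ e, γ e ≠ 0 → e ∈ C1 m N

/-- `Ω^1(B_N, ℤ₂)`: `ℤ₂`-valued one-forms on `C_1(B_N)`. -/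
def Omega1 (m N : ℕ) : Set (OEdge m → ZMod 2) :=
  {σ | (∀ e, e ∉ C1 m N → σ e = 0) ∧ ∀ e, σ (OEdge.neg e) = - σ e}

/-- The natural representation `ρ(g) = e^{iπ g} ∈ {±1}` of `ℤ₂`. -/
noncomputable def rho (g : ZMod 2) : ℝ := if g = 0 then 1 else -1

/-- The exterior derivative `dσ(p) = Σ_{e ∈ ∂p} σ(e)`. -/
def dOne {m : ℕ} (σ : OEdge m → ZMod 2) (p : OPlaq m) : ZMod 2 := (p.bdry.map σ).sum

/-- The Wilson action `S(σ) = -Σ_{p ∈ C_2(B_N)} ρ(dσ(p))`. -/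
noncomputable def action (m N : ℕ) (σ : OEdge m → ZMod 2) : ℝ :=
  - ∑ᶠ p ∈ C2 m N, rho (dOne σ p)

/-- The Wilson loop variable `W_γ(σ) = Π_{e ∈ (supp γ)^+} ρ(σ(e))`. -/
noncomputable def wilson (m : ℕ) (γ : OEdge m → ℤ) (σ : OEdge m → ZMod 2) : ℝ :=
  ∏ᶠ e ∈ {e : OEdge m | γ e ≠ 0 ∧ e.ori = true}, rho (σ e)

/-- `Z_{β,N}[γ] = Σ_{σ ∈ Ω^1(B_N,ℤ₂)} W_γ(σ) e^{-β S(σ)}`. -/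
noncomputable def Z (m N : ℕ) (β : ℝ) (γ : OEdge m → ℤ) : ℝ :=
  ∑ᶠ σ ∈ Omega1 m N, wilson m γ σ * Real.exp (- β * action m N σ)

/-- The finite-volume Gibbs expectation `E_{N,β}[f]`. -/
noncomputable def Eexp (m N : ℕ) (β : ℝ) (f : (OEdge m → ZMod 2) → ℝ) : ℝ :=
  (∑ᶠ σ ∈ Omega1 m N, f σ * Real.exp (- β * action m N σ)) /
    (∑ᶠ σ ∈ Omega1 m N, Real.exp (- β * action m N σ))

/-- `E_{N,β}[W_γ]`. -/
noncomputable def Ewilson (m N : ℕ) (β : ℝ) (γ : OEdge m → ℤ) : ℝ :=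
  Eexp m N β (wilson m γ)

/-- A current: an integer-valued `2`-form on `C_2(B_N)` that is nonnegative on
positively oriented plaquettes. -/
def IsCurrent (m N : ℕ) (n : OPlaq m → ℤ) : Prop :=
  (∀ p, p ∉ C2 m N → n p = 0) ∧ (∀ p, n (OPlaq.neg p) = - n p) ∧
    (∀ p ∈ C2plus m N, 0 ≤ n p)

/-- `𝒞_γ`: the currents with source `γ`. -/
def CurSet (m N : ℕ) (γ : OEdge m → ℤ) : Set (OPlaq m → ℤ) :=
  {n | IsCurrent m N n ∧ ∀ e ∈ C1 m N,
      ((γ e : ZMod 2) + ∑ᶠ p ∈ cob m N e, ((n p : ZMod 2))) = 0}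

/-- The weight `w_β(n) = Π_{p ∈ C_2(B_N)^+} (2β)^{n(p)}/n(p)!` of a current. -/
noncomputable def wgt (m N : ℕ) (β : ℝ) (n : OPlaq m → ℤ) : ℝ :=
  ∏ᶠ p ∈ C2plus m N, (2 * β) ^ (n p).toNat / (Nat.factorial (n p).toNat)

/-- `q ≤ n` on positively oriented plaquettes. -/
def leOn (m N : ℕ) (q n : OPlaq m → ℤ) : Prop := ∀ p ∈ C2plus m N, q p ≤ n p

/-- `𝒫_γ^{ht}`: `ℤ₂`-valued `2`-forms on `C_2(B_N)` with `δω = γ (mod 2)`. -/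
def HTset (m N : ℕ) (γ : OEdge m → ℤ) : Set (OPlaq m → ZMod 2) :=
  {ω | (∀ p, p ∉ C2 m N → ω p = 0) ∧ (∀ p, ω (OPlaq.neg p) = - ω p) ∧
    ∀ e ∈ C1 m N, (∑ᶠ p ∈ cob m N e, ω p) = (γ e : ZMod 2)}

/-- `(supp ω)^+`. -/
def suppPlus (m N : ℕ) (ω : OPlaq m → ZMod 2) : Set (OPlaq m) :=
  {p | p ∈ C2plus m N ∧ ω p ≠ 0}

/-- The high-temperature weight `(tanh 2β)^{|(supp ω)^+|}`. -/
noncomputable def htWeight (m N : ℕ) (β : ℝ) (ω : OPlaq m → ZMod 2) : ℝ :=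
  Real.tanh (2 * β) ^ (Nat.card ↥(suppPlus m N ω))

/-- The high-temperature model `P^γ_{B_N,β}`: probability mass of `ω ∈ 𝒫_γ^{ht}`. -/
noncomputable def htProb (m N : ℕ) (β : ℝ) (γ : OEdge m → ℤ) (ω : OPlaq m → ZMod 2) : ℝ :=
  htWeight m N β ω / ∑ᶠ ω' ∈ HTset m N γ, htWeight m N β ω'

/-- The random current model `𝐏^γ_{B_N,β}`: probability of an event `A ⊆ 𝒞_γ`. -/
noncomputable def rcProb (m N : ℕ) (β : ℝ) (γ : OEdge m → ℤ) (A : Set (OPlaq m → ℤ)) : ℝ :=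
  (∑' n : ↥(CurSet m N γ ∩ A), wgt m N β n) / (∑' n : ↥(CurSet m N γ), wgt m N β n)

/-- The trace `n̂` of a current: the set of positively oriented plaquettes where `n > 0`. -/
def hatCur (m N : ℕ) (n : OPlaq m → ℤ) : Set (OPlaq m) :=
  {p | p ∈ C2plus m N ∧ 0 < n p}

/-- The probability that iid Bernoulli plaquette percolation `Ψ_q` on `C_2(B_N)^+`
produces exactly the configuration (subset) `A`. -/
noncomputable def bernoulli (m N : ℕ) (q : ℝ) (A : Set (OPlaq m)) : ℝ :=
  ∏ᶠ p ∈ C2plus m N, (if p ∈ A then q else 1 - q)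

/-- `∂P ≡ γ (mod 2)`: for every edge `e ∈ C_1(B_N)` the number of plaquettes of `P`
whose boundary contains `e` or `-e` is congruent to `γ(e)` mod `2`. -/
def BdryCong (m N : ℕ) (P : Set (OPlaq m)) (γ : OEdge m → ℤ) : Prop :=
  ∀ e ∈ C1 m N,
    ((Nat.card ↥{p ∈ P | e ∈ p.bdry ∨ OEdge.neg e ∈ p.bdry} : ZMod 2)) = (γ e : ZMod 2)

/-- `𝒫_γ`: subsets of `C_2(B_N)^+` containing a subset with boundary `γ (mod 2)`. -/
def PlaqSet (m N : ℕ) (γ : OEdge m → ℤ) : Set (Set (OPlaq m)) :=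
  {P | P ⊆ C2plus m N ∧ ∃ P', P' ⊆ P ∧ BdryCong m N P' γ}

/-- `N₀(P)`: the number of `σ ∈ Ω^1(B_N,ℤ₂)` with `dσ(p) = 0` for all `p ∈ P`. -/
noncomputable def N0 (m N : ℕ) (P : Set (OPlaq m)) : ℕ :=
  Nat.card ↥{σ ∈ Omega1 m N | ∀ p ∈ P, dOne σ p = 0}

/-- The random cluster weight `N₀(P) q^{|P|} (1-q)^{|C_2(B_N)^+ ∖ P|}`. -/
noncomputable def rcmWeight (m N : ℕ) (q : ℝ) (P : Set (OPlaq m)) : ℝ :=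
  (N0 m N P : ℝ) * q ^ (Nat.card ↥P) * (1 - q) ^ (Nat.card ↥(C2plus m N \ P))

/-- The random cluster model `φ^γ_{B_N,q}`: probability mass of `P` (zero off `𝒫_γ`). -/
noncomputable def rcmProb (m N : ℕ) (q : ℝ) (γ : OEdge m → ℤ) (P : Set (OPlaq m)) : ℝ :=
  (if P ∈ PlaqSet m N γ then rcmWeight m N q P else 0) /
    ∑ᶠ P' ∈ PlaqSet m N γ, rcmWeight m N q P'

/-- `S_γ(P)`: the subsets of `P` with boundary `γ (mod 2)`. -/
def Sset (m N : ℕ) (γ : OEdge m → ℤ) (P : Set (OPlaq m)) : Set (Set (OPlaq m)) :=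
  {P' | P' ⊆ P ∧ BdryCong m N P' γ}

/-- The `ℤ₂`-valued `2`-form whose support among positively oriented plaquettes is `P'`. -/
noncomputable def formOf {m : ℕ} (P' : Set (OPlaq m)) : OPlaq m → ZMod 2 :=
  fun p => if p ∈ P' ∨ OPlaq.neg p ∈ P' then 1 else 0

/-- The vertices of the support of a loop. -/
def vertsOf (m : ℕ) (γ : OEdge m → ℤ) : Set (Site m) :=
  {x | ∃ e, γ e ≠ 0 ∧ (x = OEdge.src e ∨ x = OEdge.tgt e)}

/-- The graph (`ℓ¹`) distance between two sites of `ℤ^m`. -/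
def distL1 (m : ℕ) (x y : Site m) : ℕ := ∑ i, (x i - y i).natAbs

/-- The minimal graph distance between the supports of two loops. -/
noncomputable def suppDist (m : ℕ) (γ γ' : OEdge m → ℤ) : ℕ :=
  sInf {d | ∃ x ∈ vertsOf m γ, ∃ y ∈ vertsOf m γ', d = distL1 m x y}

/-- `area(γ) = min_{n ∈ 𝒞_γ} Σ_{p ∈ C_2(B_N)^+} n(p)`. -/
noncomputable def areaOf (m N : ℕ) (γ : OEdge m → ℤ) : ℕ :=
  sInf {k : ℕ | ∃ n ∈ CurSet m N γ, (∑ᶠ p ∈ C2plus m N, n p) = (k : ℤ)}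

/-- Translation of a loop by a lattice vector. -/
def translate (m : ℕ) (v : Site m) (γ : OEdge m → ℤ) : OEdge m → ℤ :=
  fun e => γ ⟨e.base - v, e.dir, e.ori⟩

/-- The site `a·e₀ + b·e₁` in the fixed coordinate plane spanned by the first two
coordinate directions. -/
def planeSite (m : ℕ) (h : 1 < m) (a b : ℤ) : Site m :=
  fun j => if j = (⟨0, by omega⟩ : Fin m) then a else if j = (⟨1, h⟩ : Fin m) then b else 0

/-- The axis-parallel rectangular loop `γ_{R,T}` with corners `0, R·e₀, R·e₀+T·e₁, T·e₁`
in the fixed coordinate plane spanned by the first two coordinate directions. -/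
noncomputable def rectLoop (m : ℕ) (h : 1 < m) (R T : ℕ) : OEdge m → ℤ := fun e =>
  (∑ k ∈ Finset.range R,
    ((if e = ⟨planeSite m h k 0, ⟨0, by omega⟩, true⟩ then (1 : ℤ) else 0)
      - (if e = OEdge.neg ⟨planeSite m h k 0, ⟨0, by omega⟩, true⟩ then 1 else 0)
      - (if e = ⟨planeSite m h k T, ⟨0, by omega⟩, true⟩ then 1 else 0)
      + (if e = OEdge.neg ⟨planeSite m h k T, ⟨0, by omega⟩, true⟩ then 1 else 0)))
  + (∑ k ∈ Finset.range T,
    ((if e = ⟨planeSite m h R k, ⟨1, h⟩, true⟩ then (1 : ℤ) else 0)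
      - (if e = OEdge.neg ⟨planeSite m h R k, ⟨1, h⟩, true⟩ then 1 else 0)
      - (if e = ⟨planeSite m h 0 k, ⟨1, h⟩, true⟩ then 1 else 0)
      + (if e = OEdge.neg ⟨planeSite m h 0 k, ⟨1, h⟩, true⟩ then 1 else 0)))

/-! ### Auxiliary lemmas for character orthogonality -/

section CharOrthAux

variable {m N : ℕ}

lemma zmod2_cases : ∀ a : ZMod 2, a = 0 ∨ a = 1 := by decide

lemma zmod2_neg_self : ∀ a : ZMod 2, -a = a := by decide

lemma zmod2_add_self : ∀ a : ZMod 2, a + a = 0 := by decide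

lemma OEdge.neg_neg' (e : OEdge m) : e.neg.neg = e := by
  cases e; simp [OEdge.neg]

lemma rho_zero : rho 0 = 1 := if_pos rfl

lemma rho_one : rho 1 = -1 := if_neg one_ne_zero

lemma rho_add (a b : ZMod 2) : rho (a + b) = rho a * rho b := by
  have h11 : (1 + 1 : ZMod 2) = 0 := by decide
  rcases zmod2_cases a with ha | ha <;> rcases zmod2_cases b with hb | hb <;>
    subst ha <;> subst hb <;>
    simp [rho_zero, rho_one, h11]

lemma rho_pow (x : ZMod 2) (k : ℕ) : rho x ^ k = rho ((k : ZMod 2) * x) := by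
  rcases zmod2_cases x with hx | hx <;> subst hx
  · simp [rho_zero]
  · rw [mul_one, rho_one]
    rcases Nat.even_or_odd k with hk | hk
    · have h0 : (k : ZMod 2) = 0 := (ZMod.natCast_eq_zero_iff k 2).2 hk.two_dvd
      rw [h0, rho_zero, hk.neg_one_pow]
    · have h2 : (k : ZMod 2) ≠ 0 := by
        rw [Ne, ZMod.natCast_eq_zero_iff]
        exact fun h => (Nat.not_even_iff_odd.mpr hk) (even_iff_two_dvd.mpr h)
      have h1 : (k : ZMod 2) = 1 := (zmod2_cases _).resolve_left h2
      rw [h1, rho_one, hk.neg_one_pow]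

lemma rho_sum {ι : Type*} (s : Finset ι) (f : ι → ZMod 2) :
    rho (∑ i ∈ s, f i) = ∏ i ∈ s, rho (f i) := by
  classical
  induction s using Finset.cons_induction with
  | empty => simp [rho_zero]
  | cons a s ha ih => rw [Finset.sum_cons, Finset.prod_cons, rho_add, ih]

lemma list_sum_map_eq_sum {α M : Type*} [AddCommMonoid M] [DecidableEq α] (l : List α)
    (s : Finset α) (f : α → M) (hnd : l.Nodup) (hsub : ∀ x ∈ l, x ∈ s) :
    (l.map f).sum = ∑ x ∈ s, if x ∈ l then f x else 0 := by
  rw [← List.sum_toFinset f hnd]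
  rw [show (∑ x ∈ l.toFinset, f x) = ∑ x ∈ l.toFinset, (if x ∈ l then f x else 0) from
    Finset.sum_congr rfl (fun x hx => (if_pos (List.mem_toFinset.mp hx)).symm)]
  exact Finset.sum_subset (fun x hx => hsub x (List.mem_toFinset.mp hx))
    (fun x _ hx => if_neg (fun h => hx (List.mem_toFinset.mpr h)))

lemma mem_map_neg {l : List (OEdge m)} {e : OEdge m} :
    e ∈ l.map OEdge.neg ↔ e.neg ∈ l := by
  rw [List.mem_map]
  constructor
  · rintro ⟨a, ha, rfl⟩; rwa [OEdge.neg_neg']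
  · intro h; exact ⟨e.neg, h, OEdge.neg_neg' e⟩

lemma mem_bdry_neg (p : OPlaq m) (e : OEdge m) : e ∈ p.neg.bdry ↔ e.neg ∈ p.bdry := by
  rcases p with ⟨b, d1, d2, o⟩
  cases o
  · show e ∈ OPlaq.bdry ⟨b, d1, d2, true⟩ ↔ e.neg ∈ OPlaq.bdry ⟨b, d1, d2, false⟩
    rw [show OPlaq.bdry ⟨b, d1, d2, false⟩
        = (OPlaq.bdry ⟨b, d1, d2, true⟩).map OEdge.neg from rfl, mem_map_neg, OEdge.neg_neg']
  · show e ∈ OPlaq.bdry ⟨b, d1, d2, false⟩ ↔ e.neg ∈ OPlaq.bdry ⟨b, d1, d2, true⟩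
    rw [show OPlaq.bdry ⟨b, d1, d2, false⟩
        = (OPlaq.bdry ⟨b, d1, d2, true⟩).map OEdge.neg from rfl, mem_map_neg]

lemma mem_C1_neg (e : OEdge m) : e.neg ∈ C1 m N ↔ e ∈ C1 m N := Iff.rfl

lemma mem_C2_neg (p : OPlaq m) : p.neg ∈ C2 m N ↔ p ∈ C2 m N := Iff.rfl

lemma mem_bdry_C1 {p : OPlaq m} (hp : p ∈ C2 m N) : ∀ e ∈ p.bdry, e ∈ C1 m N := by
  obtain ⟨-, hc⟩ := hp
  have h1 := hc p.base (by simp [OPlaq.corners])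
  have h2 := hc (p.base + unitVec m p.dir1) (by simp [OPlaq.corners])
  have h3 := hc (p.base + unitVec m p.dir2) (by simp [OPlaq.corners])
  have h4 := hc (p.base + unitVec m p.dir1 + unitVec m p.dir2) (by simp [OPlaq.corners])
  have key : ∀ e' ∈ ([⟨p.base, p.dir1, true⟩, ⟨p.base + unitVec m p.dir1, p.dir2, true⟩,
      ⟨p.base + unitVec m p.dir2, p.dir1, false⟩, ⟨p.base, p.dir2, false⟩] : List (OEdge m)),
      e' ∈ C1 m N := by
    intro e' he'
    simp only [List.mem_cons, List.not_mem_nil, or_false] at he'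
    rcases he' with rfl | rfl | rfl | rfl
    · exact ⟨h1, h2⟩
    · refine ⟨h2, ?_⟩
      show inBox m N (p.base + unitVec m p.dir1 + unitVec m p.dir2)
      exact h4
    · refine ⟨h3, ?_⟩
      show inBox m N (p.base + unitVec m p.dir2 + unitVec m p.dir1)
      rwa [add_right_comm]
    · exact ⟨h1, h3⟩
  intro e he
  rcases p with ⟨b, d1, d2, o⟩
  cases o
  · rw [show OPlaq.bdry ⟨b, d1, d2, false⟩
        = (OPlaq.bdry ⟨b, d1, d2, true⟩).map OEdge.neg from rfl, mem_map_neg] at he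
    exact (mem_C1_neg e).mp (key e.neg he)
  · exact key e he

lemma bdry_nodup {p : OPlaq m} (hd : p.dir1 ≠ p.dir2) : p.bdry.Nodup := by
  rcases p with ⟨b, d1, d2, o⟩
  simp only at hd
  cases o <;>
    simp [OPlaq.bdry, OEdge.neg, List.nodup_cons, OEdge.mk.injEq, hd, Ne.symm hd]

lemma finite_box (m N : ℕ) : {x : Site m | inBox m N x}.Finite := by
  have h : {x : Site m | inBox m N x} ⊆
      Set.pi Set.univ (fun _ : Fin m => Set.Icc (-(N : ℤ)) (N : ℤ)) := by
    intro x hx i _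
    exact abs_le.mp (hx i)
  exact (Set.Finite.pi (fun _ => Set.finite_Icc _ _)).subset h

lemma finite_C1 (m N : ℕ) : (C1 m N).Finite := by
  have h : C1 m N ⊆ (fun q : Site m × Fin m × Bool => OEdge.mk q.1 q.2.1 q.2.2) ''
      ({x | inBox m N x} ×ˢ (Set.univ ×ˢ Set.univ)) := by
    rintro ⟨b, d, o⟩ he
    exact ⟨(b, d, o), ⟨he.1, ⟨trivial, trivial⟩⟩, rfl⟩
  exact (((finite_box m N).prod (Set.finite_univ.prod Set.finite_univ)).image _).subset h

lemma finite_C2 (m N : ℕ) : (C2 m N).Finite := by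
  have h : C2 m N ⊆ (fun q : Site m × Fin m × Fin m × Bool =>
      OPlaq.mk q.1 q.2.1 q.2.2.1 q.2.2.2) ''
      ({x | inBox m N x} ×ˢ (Set.univ ×ˢ (Set.univ ×ˢ Set.univ))) := by
    rintro ⟨b, d1, d2, o⟩ hp
    exact ⟨(b, d1, d2, o), ⟨hp.2 b (by simp [OPlaq.corners]), ⟨trivial, trivial, trivial⟩⟩, rfl⟩
  exact (((finite_box m N).prod (Set.finite_univ.prod
    (Set.finite_univ.prod Set.finite_univ))).image _).subset h

lemma finite_Omega (m N : ℕ) : (Omega1 m N).Finite := by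
  have hC1 := finite_C1 m N
  rw [← Set.finite_coe_iff]
  refine Finite.of_injective
    (fun σ : ↥(Omega1 m N) => (fun e : ↥hC1.toFinset => σ.1 e.1)) ?_
  intro σ τ h
  apply Subtype.ext
  funext e
  by_cases he : e ∈ C1 m N
  · exact congrFun h ⟨e, hC1.mem_toFinset.mpr he⟩
  · rw [σ.2.1 e he, τ.2.1 e he]

end CharOrthAux

section CharOrthCore

variable {m N : ℕ}

lemma OPlaq.neg_neg' (p : OPlaq m) : p.neg.neg = p := by
  cases p; simp [OPlaq.neg]

lemma finite_C2plus (m N : ℕ) : (C2plus m N).Finite :=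
  (finite_C2 m N).subset fun _ hp => hp.1

/-- Positively oriented edges of `C_1(B_N)`, as a finset. -/
noncomputable def C1pos (m N : ℕ) : Finset (OEdge m) :=
  (finite_C1 m N).toFinset.filter (fun e => e.ori = true)

/-- The defect `d(e) = γ(e) + Σ_{p ∈ cob e} n(p)` in `ℤ₂`. -/
noncomputable def dd (m N : ℕ) (γ : OEdge m → ℤ) (n : OPlaq m → ℤ) (e : OEdge m) : ZMod 2 :=
  (γ e : ZMod 2) + ∑ᶠ p ∈ cob m N e, ((n p : ZMod 2))

lemma cob_sum (n : OPlaq m → ℤ) (e : OEdge m) :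
    (∑ᶠ p ∈ cob m N e, ((n p : ZMod 2))) =
      ∑ p ∈ (finite_C2 m N).toFinset, if e ∈ p.bdry then ((n p : ZMod 2)) else 0 := by
  classical
  have hfin : (cob m N e).Finite := (finite_C2 m N).subset (fun p hp => hp.1)
  rw [finsum_mem_eq_finite_toFinset_sum _ hfin, ← Finset.sum_filter]
  congr 1
  ext p
  simp [Set.Finite.mem_toFinset, Finset.mem_filter, cob]

lemma sum_C2F_neg (g : OPlaq m → ZMod 2) :
    ∑ p ∈ (finite_C2 m N).toFinset, g (OPlaq.neg p)
      = ∑ p ∈ (finite_C2 m N).toFinset, g p := by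
  refine Finset.sum_nbij' (i := OPlaq.neg) (j := OPlaq.neg) ?_ ?_ ?_ ?_ ?_
  · intro p hp
    rw [Set.Finite.mem_toFinset] at hp ⊢
    exact (mem_C2_neg p).mpr hp
  · intro p hp
    rw [Set.Finite.mem_toFinset] at hp ⊢
    exact (mem_C2_neg p).mpr hp
  · intro p _; exact OPlaq.neg_neg' p
  · intro p _; exact OPlaq.neg_neg' p
  · intro p _; rfl

lemma dd_neg {γ : OEdge m → ℤ} {n : OPlaq m → ℤ} (hγa : ∀ e, γ (OEdge.neg e) = - γ e)
    (hna : ∀ p, n (OPlaq.neg p) = - n p) (e : OEdge m) :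
    dd m N γ n (OEdge.neg e) = dd m N γ n e := by
  unfold dd
  rw [cob_sum, cob_sum]
  have h1 : ((γ (OEdge.neg e) : ℤ) : ZMod 2) = ((γ e : ℤ) : ZMod 2) := by
    rw [hγa]; push_cast; rw [zmod2_neg_self]
  rw [h1]
  congr 1
  rw [← sum_C2F_neg (fun q => if OEdge.neg e ∈ q.bdry then ((n q : ZMod 2)) else 0)]
  refine Finset.sum_congr rfl fun p _ => ?_
  have hb : (OEdge.neg e ∈ (OPlaq.neg p).bdry) = (e ∈ p.bdry) := by
    rw [mem_bdry_neg, OEdge.neg_neg']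
  have hv : ((n (OPlaq.neg p) : ℤ) : ZMod 2) = ((n p : ℤ) : ZMod 2) := by
    rw [hna]; push_cast; rw [zmod2_neg_self]
  simp only [hb, hv]

lemma chi_mem (e : OEdge m) (he : e ∈ C1 m N) :
    (fun e' => if e' = e ∨ e' = OEdge.neg e then (1 : ZMod 2) else 0) ∈ Omega1 m N := by
  constructor
  · intro e' he'
    apply if_neg
    rintro (rfl | rfl)
    · exact he' he
    · exact he' ((mem_C1_neg e).mpr he)
  · intro e'
    rw [zmod2_neg_self]
    have hiff : (OEdge.neg e' = e ∨ OEdge.neg e' = OEdge.neg e) ↔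
        (e' = e ∨ e' = OEdge.neg e) := by
      constructor
      · rintro (rfl | h)
        · right; rw [OEdge.neg_neg']
        · left
          have := congrArg OEdge.neg h
          rwa [OEdge.neg_neg', OEdge.neg_neg'] at this
      · rintro (rfl | rfl)
        · right; rfl
        · left; rw [OEdge.neg_neg']
    simp only [hiff]

lemma omega_add {σ τ : OEdge m → ZMod 2} (hσ : σ ∈ Omega1 m N) (hτ : τ ∈ Omega1 m N) :
    (fun e => σ e + τ e) ∈ Omega1 m N :=
  ⟨fun e he => by show σ e + τ e = 0; rw [hσ.1 e he, hτ.1 e he, add_zero],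
   fun e => by show σ (OEdge.neg e) + τ (OEdge.neg e) = _; rw [hσ.2 e, hτ.2 e, neg_add]⟩

lemma master {γ : OEdge m → ℤ} {n : OPlaq m → ℤ}
    (hγ : LoopIn m N γ) (hn : IsCurrent m N n)
    (hSf : {e : OEdge m | γ e ≠ 0 ∧ e.ori = true}.Finite)
    (σ : OEdge m → ZMod 2) (hσa : ∀ e, σ (OEdge.neg e) = - σ e) :
    (∑ e ∈ hSf.toFinset, σ e)
      + ∑ p ∈ (finite_C2plus m N).toFinset, ((n p : ZMod 2)) * dOne σ p
      = ∑ e ∈ C1pos m N, σ e * dd m N γ n e := by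
  classical
  set C1t := (finite_C1 m N).toFinset with hC1t
  set Pt := (finite_C2plus m N).toFinset with hPt
  set coef : OEdge m → ZMod 2 := fun e =>
    (if e ∈ hSf.toFinset then 1 else 0)
      + ∑ p ∈ Pt, (if e ∈ p.bdry then ((n p : ZMod 2)) else 0) with hcoef
  have hSsub : hSf.toFinset ⊆ C1t := by
    intro e he
    rw [Set.Finite.mem_toFinset] at he
    rw [hC1t, Set.Finite.mem_toFinset]
    exact hγ.2 e he.1
  have hA : ∑ e ∈ C1t, (if e ∈ hSf.toFinset then (1 : ZMod 2) else 0) * σ e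
      = ∑ e ∈ hSf.toFinset, σ e := by
    have h1 : ∀ e ∈ C1t, (if e ∈ hSf.toFinset then (1 : ZMod 2) else 0) * σ e
        = (if e ∈ hSf.toFinset then σ e else 0) := by
      intro e _; split_ifs <;> simp
    rw [Finset.sum_congr rfl h1, Finset.sum_ite_mem, Finset.inter_eq_right.mpr hSsub]
  have hB : ∀ p ∈ Pt, dOne σ p = ∑ e ∈ C1t, (if e ∈ p.bdry then σ e else 0) := by
    intro p hp
    rw [hPt, Set.Finite.mem_toFinset] at hp
    exact list_sum_map_eq_sum p.bdry C1t σ (bdry_nodup (ne_of_lt hp.1.1))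
      (fun x hx => by rw [hC1t, Set.Finite.mem_toFinset]; exact mem_bdry_C1 hp.1 x hx)
  have hB' : ∑ p ∈ Pt, ((n p : ZMod 2)) * dOne σ p
      = ∑ e ∈ C1t, (∑ p ∈ Pt, (if e ∈ p.bdry then ((n p : ZMod 2)) else 0)) * σ e := by
    calc ∑ p ∈ Pt, ((n p : ZMod 2)) * dOne σ p
        = ∑ p ∈ Pt, ∑ e ∈ C1t, (if e ∈ p.bdry then ((n p : ZMod 2)) * σ e else 0) := by
          refine Finset.sum_congr rfl fun p hp => ?_
          rw [hB p hp, Finset.mul_sum]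
          refine Finset.sum_congr rfl fun e _ => ?_
          split_ifs <;> simp
      _ = ∑ e ∈ C1t, ∑ p ∈ Pt, (if e ∈ p.bdry then ((n p : ZMod 2)) else 0) * σ e := by
          rw [Finset.sum_comm]
          refine Finset.sum_congr rfl fun e _ => Finset.sum_congr rfl fun p _ => ?_
          split_ifs <;> simp
      _ = ∑ e ∈ C1t, (∑ p ∈ Pt, (if e ∈ p.bdry then ((n p : ZMod 2)) else 0)) * σ e := by
          refine Finset.sum_congr rfl fun e _ => (Finset.sum_mul _ _ _).symm
  have hL : (∑ e ∈ hSf.toFinset, σ e) + ∑ p ∈ Pt, ((n p : ZMod 2)) * dOne σ p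
      = ∑ e ∈ C1t, coef e * σ e := by
    rw [← hA, hB', ← Finset.sum_add_distrib]
    exact Finset.sum_congr rfl fun e _ => (add_mul _ _ _).symm
  have hC1neg : ∀ e : OEdge m, e ∈ C1t → OEdge.neg e ∈ C1t := by
    intro e he
    rw [hC1t, Set.Finite.mem_toFinset] at he ⊢
    exact (mem_C1_neg e).mpr he
  have hneg : ∑ e ∈ C1t.filter (fun e => ¬ e.ori = true), coef e * σ e
      = ∑ e ∈ C1t.filter (fun e => e.ori = true), coef (OEdge.neg e) * σ e := by
    refine Finset.sum_nbij' (i := OEdge.neg) (j := OEdge.neg) ?_ ?_ ?_ ?_ ?_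
    · intro a ha
      rw [Finset.mem_filter] at ha ⊢
      have ha2 : a.ori = false := by
        cases h : a.ori
        · rfl
        · exact absurd h ha.2
      exact ⟨hC1neg a ha.1, by show (!a.ori) = true; rw [ha2]; rfl⟩
    · intro a ha
      rw [Finset.mem_filter] at ha ⊢
      refine ⟨hC1neg a ha.1, ?_⟩
      show ¬ (!a.ori) = true
      rw [ha.2]
      simp
    · intro a _; exact OEdge.neg_neg' a
    · intro a _; exact OEdge.neg_neg' a
    · intro a _
      rw [OEdge.neg_neg', hσa, zmod2_neg_self]
  have hpair : ∑ e ∈ C1t, coef e * σ e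
      = ∑ e ∈ C1t.filter (fun e => e.ori = true), (coef e + coef (OEdge.neg e)) * σ e := by
    rw [← Finset.sum_filter_add_sum_filter_not C1t (fun e => e.ori = true)
      (fun e => coef e * σ e), hneg, ← Finset.sum_add_distrib]
    exact Finset.sum_congr rfl fun e _ => (add_mul _ _ _).symm
  have hkey : ∀ e ∈ C1t.filter (fun e => e.ori = true),
      coef e + coef (OEdge.neg e) = dd m N γ n e := by
    intro e he
    rw [Finset.mem_filter] at he
    have hepos : e.ori = true := he.2
    have hS1 : (if OEdge.neg e ∈ hSf.toFinset then (1 : ZMod 2) else 0) = 0 := by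
      apply if_neg
      rw [Set.Finite.mem_toFinset]
      rintro ⟨-, h⟩
      rw [show (OEdge.neg e).ori = !e.ori from rfl, hepos] at h
      exact absurd h (by simp)
    have hS2 : (if e ∈ hSf.toFinset then (1 : ZMod 2) else 0) = ((γ e : ℤ) : ZMod 2) := by
      rcases hγ.1.vals e with hv | hv | hv
      · rw [if_pos (hSf.mem_toFinset.mpr ⟨by rw [hv]; norm_num, hepos⟩), hv]
        decide
      · rw [if_neg (fun hmem => ((hSf.mem_toFinset.mp hmem).1 hv)), hv]
        decide
      · rw [if_pos (hSf.mem_toFinset.mpr ⟨by rw [hv]; norm_num, hepos⟩), hv]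
        decide
    have hPt_eq : Pt = (finite_C2 m N).toFinset.filter (fun p => p.ori = true) := by
      ext p
      rw [hPt, Set.Finite.mem_toFinset, Finset.mem_filter, Set.Finite.mem_toFinset]
      exact Iff.rfl
    have hC2neg : ∀ p : OPlaq m, p ∈ (finite_C2 m N).toFinset →
        OPlaq.neg p ∈ (finite_C2 m N).toFinset := by
      intro p hp
      rw [Set.Finite.mem_toFinset] at hp ⊢
      exact (mem_C2_neg p).mpr hp
    have hT : (∑ p ∈ Pt, (if e ∈ p.bdry then ((n p : ZMod 2)) else 0))
        + (∑ p ∈ Pt, (if OEdge.neg e ∈ p.bdry then ((n p : ZMod 2)) else 0))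
        = ∑ p ∈ (finite_C2 m N).toFinset, (if e ∈ p.bdry then ((n p : ZMod 2)) else 0) := by
      rw [← Finset.sum_filter_add_sum_filter_not ((finite_C2 m N).toFinset)
        (fun p => p.ori = true) (fun p => if e ∈ p.bdry then ((n p : ZMod 2)) else 0), hPt_eq]
      congr 1
      refine Finset.sum_nbij' (i := OPlaq.neg) (j := OPlaq.neg) ?_ ?_ ?_ ?_ ?_
      · intro p hp
        rw [Finset.mem_filter] at hp ⊢
        refine ⟨hC2neg p hp.1, ?_⟩
        show ¬ (!p.ori) = true
        rw [hp.2]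
        simp
      · intro p hp
        rw [Finset.mem_filter] at hp ⊢
        have hp2 : p.ori = false := by
          cases h : p.ori
          · rfl
          · exact absurd h hp.2
        exact ⟨hC2neg p hp.1, by show (!p.ori) = true; rw [hp2]; rfl⟩
      · intro p _; exact OPlaq.neg_neg' p
      · intro p _; exact OPlaq.neg_neg' p
      · intro p _
        have hb : (OEdge.neg e ∈ p.bdry) = (e ∈ (OPlaq.neg p).bdry) := by
          rw [mem_bdry_neg]
        have hv : ((n (OPlaq.neg p) : ℤ) : ZMod 2) = ((n p : ℤ) : ZMod 2) := by
          rw [hn.2.1]; push_cast; rw [zmod2_neg_self]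
        simp only [hb, hv]
    rw [hcoef]
    simp only []
    rw [dd, cob_sum, hS1, hS2, zero_add, ← hT]
    ring
  calc (∑ e ∈ hSf.toFinset, σ e) + ∑ p ∈ Pt, ((n p : ZMod 2)) * dOne σ p
      = ∑ e ∈ C1t, coef e * σ e := hL
    _ = ∑ e ∈ C1t.filter (fun e => e.ori = true), (coef e + coef (OEdge.neg e)) * σ e := hpair
    _ = ∑ e ∈ C1pos m N, σ e * dd m N γ n e := by
        refine Finset.sum_congr rfl fun e he => ?_
        rw [hkey e he, mul_comm]

end CharOrthCore

/-- **Character orthogonality over gauge configurations**: the sum over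
`σ ∈ Ω^1(B_N,ℤ₂)` of `ρ(σ(γ)) Π_p ρ(dσ(p))^{n(p)}` is `|Ω^1(B_N,ℤ₂)|` if `n ∈ 𝒞_γ`
and `0` otherwise. -/
theorem character_orthogonality (m N : ℕ) (hm : 3 ≤ m) (hN : 1 ≤ N)
    (γ : OEdge m → ℤ) (hγ : LoopIn m N γ) (n : OPlaq m → ℤ) (hn : IsCurrent m N n) :
    (∑ᶠ σ ∈ Omega1 m N,
        wilson m γ σ * ∏ᶠ p ∈ C2plus m N, (rho (dOne σ p)) ^ (n p).toNat)
      = if n ∈ CurSet m N γ then (Nat.card ↥(Omega1 m N) : ℝ) else 0 := by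
  classical
  have hSf : ({e : OEdge m | γ e ≠ 0 ∧ e.ori = true}).Finite :=
    hγ.1.finite_supp.subset (fun e he => he.1)
  have hΩf := finite_Omega m N
  rw [finsum_mem_eq_finite_toFinset_sum _ hΩf]
  have hpt : ∀ σ ∈ hΩf.toFinset,
      wilson m γ σ * ∏ᶠ p ∈ C2plus m N, (rho (dOne σ p)) ^ (n p).toNat
        = rho (∑ e ∈ C1pos m N, σ e * dd m N γ n e) := by
    intro σ hσmem
    rw [Set.Finite.mem_toFinset] at hσmem
    have h1 : wilson m γ σ = rho (∑ e ∈ hSf.toFinset, σ e) := by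
      unfold wilson
      rw [finprod_mem_eq_finite_toFinset_prod _ hSf, ← rho_sum]
    have h2 : (∏ᶠ p ∈ C2plus m N, (rho (dOne σ p)) ^ (n p).toNat)
        = rho (∑ p ∈ (finite_C2plus m N).toFinset, ((n p : ZMod 2)) * dOne σ p) := by
      rw [finprod_mem_eq_finite_toFinset_prod _ (finite_C2plus m N), rho_sum]
      refine Finset.prod_congr rfl fun p hp => ?_
      rw [Set.Finite.mem_toFinset] at hp
      rw [rho_pow]
      congr 2
      rw [show (((n p).toNat : ℕ) : ZMod 2) = (((n p).toNat : ℤ) : ZMod 2) from by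
        push_cast; rfl]
      rw [Int.toNat_of_nonneg (hn.2.2 p hp)]
    rw [h1, h2, ← rho_add]
    congr 1
    exact master hγ hn hSf σ hσmem.2
  rw [Finset.sum_congr rfl hpt]
  have hCur : n ∈ CurSet m N γ ↔ ∀ e ∈ C1 m N, dd m N γ n e = 0 := by
    constructor
    · intro h; exact h.2
    · intro h; exact ⟨hn, h⟩
  by_cases hc : n ∈ CurSet m N γ
  · rw [if_pos hc]
    have h1 : ∀ σ ∈ hΩf.toFinset, rho (∑ e ∈ C1pos m N, σ e * dd m N γ n e) = 1 := by
      intro σ _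
      have hz : ∀ e ∈ C1pos m N, σ e * dd m N γ n e = 0 := by
        intro e he
        have heC1 : e ∈ C1 m N := by
          simp only [C1pos, Finset.mem_filter, Set.Finite.mem_toFinset] at he
          exact he.1
        rw [hCur.mp hc e heC1, mul_zero]
      rw [Finset.sum_eq_zero hz, rho_zero]
    rw [Finset.sum_congr rfl h1, Finset.sum_const, nsmul_eq_mul, mul_one]
    rw [Nat.card_coe_set_eq, Set.ncard_eq_toFinset_card _ hΩf]
  · rw [if_neg hc]
    obtain ⟨e₀, he₀, hd₀⟩ : ∃ e ∈ C1 m N, dd m N γ n e ≠ 0 := by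
      by_contra h
      push_neg at h
      exact hc (hCur.mpr h)
    obtain ⟨e₁, he₁, hpos₁, hd₁⟩ : ∃ e, e ∈ C1 m N ∧ e.ori = true ∧ dd m N γ n e ≠ 0 := by
      cases hbo : e₀.ori
      · refine ⟨OEdge.neg e₀, (mem_C1_neg e₀).mpr he₀, ?_, ?_⟩
        · show (!e₀.ori) = true
          rw [hbo]; rfl
        · rwa [dd_neg hγ.1.antisym hn.2.1]
      · exact ⟨e₀, he₀, hbo, hd₀⟩
    set σ₀ : OEdge m → ZMod 2 :=
      fun e' => if e' = e₁ ∨ e' = OEdge.neg e₁ then 1 else 0 with hσ₀def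
    have hσ₀Ω : σ₀ ∈ Omega1 m N := chi_mem e₁ he₁
    have hL1 : (∑ e ∈ C1pos m N, σ₀ e * dd m N γ n e) = 1 := by
      have hterm : ∀ e ∈ C1pos m N, σ₀ e * dd m N γ n e
          = if e = e₁ then dd m N γ n e else 0 := by
        intro e he
        simp only [C1pos, Finset.mem_filter, Set.Finite.mem_toFinset] at he
        by_cases h1 : e = e₁
        · subst h1
          simp [hσ₀def]
        · have h2 : e ≠ OEdge.neg e₁ := by
            intro h
            have hh : (OEdge.neg e₁).ori = true := h ▸ he.2
            rw [show (OEdge.neg e₁).ori = !e₁.ori from rfl, hpos₁] at hh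
            simp at hh
          simp [hσ₀def, h1, h2]
      rw [Finset.sum_congr rfl hterm, Finset.sum_ite_eq' (C1pos m N) e₁ (dd m N γ n)]
      rw [if_pos (by
        simp only [C1pos, Finset.mem_filter, Set.Finite.mem_toFinset]
        exact ⟨he₁, hpos₁⟩)]
      rcases zmod2_cases (dd m N γ n e₁) with h | h
      · exact absurd h hd₁
      · exact h
    have hflip : ∀ σ : OEdge m → ZMod 2,
        rho (∑ e ∈ C1pos m N, (σ e + σ₀ e) * dd m N γ n e)
          = - rho (∑ e ∈ C1pos m N, σ e * dd m N γ n e) := by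
      intro σ
      have hsplit : ∑ e ∈ C1pos m N, (σ e + σ₀ e) * dd m N γ n e
          = (∑ e ∈ C1pos m N, σ e * dd m N γ n e)
            + ∑ e ∈ C1pos m N, σ₀ e * dd m N γ n e := by
        rw [← Finset.sum_add_distrib]
        exact Finset.sum_congr rfl fun e _ => add_mul _ _ _
      rw [hsplit, hL1, rho_add, rho_one]
      ring
    have hre : ∑ σ ∈ hΩf.toFinset, rho (∑ e ∈ C1pos m N, σ e * dd m N γ n e)
        = ∑ σ ∈ hΩf.toFinset, rho (∑ e ∈ C1pos m N, (σ e + σ₀ e) * dd m N γ n e) := by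
      refine Finset.sum_nbij' (i := fun σ => fun e => σ e + σ₀ e)
        (j := fun σ => fun e => σ e + σ₀ e) ?_ ?_ ?_ ?_ ?_
      · intro a ha
        rw [Set.Finite.mem_toFinset] at ha ⊢
        exact omega_add ha hσ₀Ω
      · intro a ha
        rw [Set.Finite.mem_toFinset] at ha ⊢
        exact omega_add ha hσ₀Ω
      · intro a _
        funext e
        show a e + σ₀ e + σ₀ e = a e
        rw [add_assoc, zmod2_add_self, add_zero]
      · intro a _
        funext e
        show a e + σ₀ e + σ₀ e = a e
        rw [add_assoc, zmod2_add_self, add_zero]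
      · intro a _
        congr 1
        refine Finset.sum_congr rfl fun e _ => ?_
        show a e * dd m N γ n e = (a e + σ₀ e + σ₀ e) * dd m N γ n e
        rw [add_assoc, zmod2_add_self, add_zero]
    have hzero : ∑ σ ∈ hΩf.toFinset, rho (∑ e ∈ C1pos m N, σ e * dd m N γ n e)
        = - ∑ σ ∈ hΩf.toFinset, rho (∑ e ∈ C1pos m N, σ e * dd m N γ n e) := by
      calc ∑ σ ∈ hΩf.toFinset, rho (∑ e ∈ C1pos m N, σ e * dd m N γ n e)
          = ∑ σ ∈ hΩf.toFinset, rho (∑ e ∈ C1pos m N, (σ e + σ₀ e) * dd m N γ n e) := hre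
        _ = ∑ σ ∈ hΩf.toFinset, - rho (∑ e ∈ C1pos m N, σ e * dd m N γ n e) :=
            Finset.sum_congr rfl fun σ _ => hflip σ
        _ = - ∑ σ ∈ hΩf.toFinset, rho (∑ e ∈ C1pos m N, σ e * dd m N γ n e) :=
            Finset.sum_neg_distrib _
    linarith


end LGT
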